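/- arXiv:1509.02478 — 2 statements merged into one kernel-verified Lean document; each statement's English description precedes it below -/
import Mathlib

section
/- A ribbon graph consisting solely of a single cycle of even length l has exactly two distinct Green walks, each of even length l, and these split into exactly four distinct double-stepped Green walks, each of length l/2. -/
/-!
A ribbon graph is encoded as a combinatorial map on a finite set `H` of half-edges:
`sigma` is the fixed-point-free involution pairing the two half-edges of each edge,
and `rho` is the permutation whose cycles are the cyclic orderings of the half-edges
around each vertex.  Edges are the orbits of `sigma`, vertices the orbits of `rho`.
The Green walk step sends a half-edge `x` at a vertex `v` to the half-edge `y`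
whose opposite half-edge is the successor `rho x` of `x` at `v`, i.e. `y = sigma (rho x)`.
-/

structure RibbonGraph (H : Type) where
  sigma : Equiv.Perm H
  rho : Equiv.Perm H
  invol : ∀ x, sigma (sigma x) = x
  noFix : ∀ x, sigma x ≠ x
  conn : ∀ x y, Relation.EqvGen (fun a b => sigma a = b ∨ rho a = b) x y

/-- The orbit ("same cycle") setoid of a permutation. -/
def sameCycleSetoid {H : Type} (π : Equiv.Perm H) : Setoid H :=
  ⟨π.SameCycle, ⟨fun x => Equiv.Perm.SameCycle.refl π x, fun h => h.symm,
    fun h₁ h₂ => h₁.trans h₂⟩⟩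

namespace RibbonGraph

variable {H : Type}

/-- The step map of the (anticlockwise) Green walk: `x ↦ sigma (rho x)`. -/
def step (G : RibbonGraph H) : Equiv.Perm H := G.rho.trans G.sigma

/-- The step map of the clockwise Green walk: `x ↦ sigma (rho⁻¹ x)`. -/
def stepC (G : RibbonGraph H) : Equiv.Perm H := G.rho.symm.trans G.sigma

/-- The number of edges: the number of orbits of the involution `sigma`. -/
noncomputable def numEdges (G : RibbonGraph H) : ℕ := Nat.card (Quotient (sameCycleSetoid G.sigma))

/-- The number of vertices: the number of orbits of `rho`. -/
noncomputable def numVertices (G : RibbonGraph H) : ℕ := Nat.card (Quotient (sameCycleSetoid G.rho))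

/-- A (connected) ribbon graph is a tree when `#vertices = #edges + 1`. -/
def IsTree (G : RibbonGraph H) : Prop := G.numVertices = G.numEdges + 1

/-- A half-edge `x` spans a bridge if its edge `{x, sigma x}` disconnects the graph:
there is no walk from `x` to `sigma x` avoiding that edge. -/
def IsBridge (G : RibbonGraph H) (x₀ : H) : Prop :=
  ¬ Relation.ReflTransGen
      (fun a b => G.rho a = b ∨ G.rho b = a ∨ (G.sigma a = b ∧ a ≠ x₀ ∧ a ≠ G.sigma x₀))
      x₀ (G.sigma x₀)

end RibbonGraph

/-!
Since every vertex is 2-valent, both `σ` and `ρ` conjugate the Green step `σρ` to its inverse.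
So if `(σρ)^(2j)` sent `x` to `τ x` with `τ ∈ {σ, ρ}`, then `(σρ)^j x` would be a fixed point
of `τ`; as `(σρ)^(2j+1) x = σ x` amounts to `(σρ)^(2j) x = ρ x`, a half-edge and its partner
never lie on the same Green walk. By connectivity these two walks cover all `2l` half-edges,
and `σ` maps one onto the other, so every Green walk has period `l`; squaring the step then
halves the period. Splitting `2l` half-edges into walks of a common length leaves exactly `2`
walks of length `l` and `4` double-stepped walks of length `l/2`.
-/

open Function

namespace Equiv.Perm

variable {α : Type*} {f τ : Perm α}

theorem sameCycle_apply_apply_iff_of_conj_eq_inv (hτ : τ * f * τ⁻¹ = f⁻¹) {a b : α} :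
    f.SameCycle (τ a) (τ b) ↔ f.SameCycle a b := by
  rw [← sameCycle_inv, ← hτ, sameCycle_conj, coe_inv, symm_apply_apply, symm_apply_apply]

theorem apply_zpow_apply_eq_of_conj_eq_inv (hτ : τ * f * τ⁻¹ = f⁻¹) {x : α} {j : ℤ}
    (h : (f ^ (2 * j)) x = τ x) : τ ((f ^ j) x) = (f ^ j) x := by
  have hconj : τ * f ^ j * τ⁻¹ = f ^ (-j) := by rw [← conj_zpow, hτ, inv_zpow', zpow_neg]
  calc τ ((f ^ j) x) = (τ * f ^ j * τ⁻¹) (τ x) := by simp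
    _ = (f ^ (-j) * f ^ (2 * j)) x := by rw [hconj, mul_apply, h]
    _ = (f ^ j) x := by rw [← zpow_add]; congr 2; ring

theorem minimalPeriod_eq_card_sameCycle [Finite α] (f : Perm α) (x : α) :
    minimalPeriod f x = Nat.card {y // f.SameCycle x y} := by
  have := Fintype.ofFinite α
  classical
  rw [show (f : α → α) = (f • ·) from rfl, MulAction.minimalPeriod_eq_card,
    ← Nat.card_eq_fintype_card]
  exact Nat.card_congr (Equiv.subtypeEquivRight fun y => by
    simp only [MulAction.mem_orbit_iff, Subtype.exists, Subgroup.mem_zpowers_iff,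
      exists_prop, exists_exists_eq_and, MulAction.subgroup_smul_def, Perm.smul_def, SameCycle])

theorem card_quotient_sameCycle_mul [Finite α] {n : ℕ} (hn : ∀ x, minimalPeriod f x = n) :
    Nat.card (Quotient (SameCycle.setoid f)) * n = Nat.card α := by
  have := Fintype.ofFinite α
  classical
  have hfiber : ∀ q : Quotient (SameCycle.setoid f),
      Nat.card {x // Quotient.mk _ x = q} = n := by
    refine Quotient.ind fun x => ?_
    rw [← hn x, minimalPeriod_eq_card_sameCycle]
    exact Nat.card_congr (Equiv.subtypeEquivRight fun y =>
      Quotient.eq.trans sameCycle_comm)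
  rw [← Nat.card_congr (Equiv.sigmaFiberEquiv (Quotient.mk (SameCycle.setoid f))),
    Nat.card_sigma, Finset.sum_congr rfl fun q _ => hfiber q, Finset.sum_const,
    Finset.card_univ, smul_eq_mul, Nat.card_eq_fintype_card]

end Equiv.Perm

open Equiv.Perm

namespace RibbonGraph

variable {H : Type} {G : RibbonGraph H}

theorem sigma_mul_step_mul_sigma_inv (hρ : ∀ x, G.rho (G.rho x) = x) :
    G.sigma * G.step * G.sigma⁻¹ = G.step⁻¹ :=
  eq_inv_of_mul_eq_one_left (Equiv.ext fun x => by simp [step, G.invol, hρ])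

theorem rho_mul_step_mul_rho_inv (hρ : ∀ x, G.rho (G.rho x) = x) :
    G.rho * G.step * G.rho⁻¹ = G.step⁻¹ :=
  eq_inv_of_mul_eq_one_left (Equiv.ext fun x => by simp [step, G.invol, hρ])

theorem step_sameCycle_sigma_left_iff (hρ : ∀ x, G.rho (G.rho x) = x) {a b : H} :
    G.step.SameCycle (G.sigma a) b ↔ G.step.SameCycle a (G.sigma b) := by
  rw [← sameCycle_apply_apply_iff_of_conj_eq_inv (sigma_mul_step_mul_sigma_inv hρ), G.invol]

theorem not_step_sameCycle_sigma (hval : ∀ x, G.rho (G.rho x) = x ∧ G.rho x ≠ x) (x : H) :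
    ¬ G.step.SameCycle x (G.sigma x) := by
  have hρ x := (hval x).1
  rintro ⟨k, hk⟩
  obtain ⟨j, rfl | rfl⟩ := Int.even_or_odd' k
  · exact G.noFix _ (apply_zpow_apply_eq_of_conj_eq_inv (sigma_mul_step_mul_sigma_inv hρ) hk)
  · have hk' : (G.step ^ (2 * j)) x = G.rho x := by
      rw [add_comm, zpow_one_add, mul_apply] at hk
      simpa [hρ] using congrArg G.rho (G.sigma.injective hk)
    exact (hval _).2 (apply_zpow_apply_eq_of_conj_eq_inv (rho_mul_step_mul_rho_inv hρ) hk')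

theorem step_sameCycle_or_sameCycle_sigma (hρ : ∀ x, G.rho (G.rho x) = x) (x y : H) :
    G.step.SameCycle x y ∨ G.step.SameCycle (G.sigma x) y := by
  let P a := G.step.SameCycle x a ∨ G.step.SameCycle (G.sigma x) a
  have hσ : ∀ a, P a ↔ P (G.sigma a) := fun a => by
    simp only [P, step_sameCycle_sigma_left_iff hρ, G.invol, or_comm]
  have hρ' : ∀ a, P a ↔ P (G.rho a) := fun a => by
    rw [show G.rho a = G.sigma (G.step a) from (G.invol _).symm, ← hσ]
    simp only [P, sameCycle_apply_right]
  have hP : Equivalence fun a b => P a ↔ P b := ⟨fun _ => Iff.rfl, Iff.symm, Iff.trans⟩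
  refine (hP.eqvGen_iff.1 ((G.conn x y).mono fun a b hab => ?_)).1 (Or.inl (.refl _ _))
  rcases hab with rfl | rfl
  exacts [hσ a, hρ' a]

theorem card_eq_two_mul_card_step_sameCycle [Finite H]
    (hval : ∀ x, G.rho (G.rho x) = x ∧ G.rho x ≠ x) (x : H) :
    Nat.card H = 2 * Nat.card {y // G.step.SameCycle x y} := by
  classical
  have hρ x := (hval x).1
  have hcompl : {y // ¬ G.step.SameCycle x y} ≃ {y // G.step.SameCycle (G.sigma x) y} :=
    Equiv.subtypeEquivRight fun y =>
      ⟨(step_sameCycle_or_sameCycle_sigma hρ x y).resolve_left,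
        fun hσy hy => not_step_sameCycle_sigma hval x (hy.trans hσy.symm)⟩
  have hσ : {y // G.step.SameCycle x y} ≃ {y // G.step.SameCycle (G.sigma x) y} :=
    G.sigma.subtypeEquiv fun _ =>
      (sameCycle_apply_apply_iff_of_conj_eq_inv (sigma_mul_step_mul_sigma_inv hρ)).symm
  rw [← Nat.card_congr (Equiv.sumCompl fun y => G.step.SameCycle x y), Nat.card_sum,
    Nat.card_congr hcompl, ← Nat.card_congr hσ, two_mul]

theorem minimalPeriod_step [Finite H] (hval : ∀ x, G.rho (G.rho x) = x ∧ G.rho x ≠ x)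
    {l : ℕ} (hcard : Nat.card H = 2 * l) (x : H) : minimalPeriod G.step x = l := by
  have := card_eq_two_mul_card_step_sameCycle hval x
  rw [minimalPeriod_eq_card_sameCycle]
  omega

end RibbonGraph

/-- A ribbon graph consisting solely of a single cycle of even length
`l` (a connected graph in which every vertex has valency exactly `2`, with `2 l`
half-edges in total) has exactly two distinct Green walks, each of (even) length `l`,
and these split into exactly four distinct double-stepped Green walks, each of
length `l / 2`. -/
theorem even_cycle_green_walks
    (H : Type) [Fintype H] (G : RibbonGraph H) (l : ℕ) (heven : Even l) (hl : 0 < l)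
    (hcard : Fintype.card H = 2 * l)
    (hval : ∀ x : H, G.rho (G.rho x) = x ∧ G.rho x ≠ x) :
    Nat.card (Quotient (sameCycleSetoid G.step)) = 2 ∧
      (∀ x : H, Function.minimalPeriod (⇑G.step) x = l) ∧
      Nat.card (Quotient (sameCycleSetoid (G.step ^ 2))) = 4 ∧
      (∀ x : H, Function.minimalPeriod (⇑(G.step ^ 2)) x = l / 2) := by
  rw [← Nat.card_eq_fintype_card] at hcard
  have hperiod : ∀ x, minimalPeriod G.step x = l := G.minimalPeriod_step hval hcard
  have hperiod₂ : ∀ x, minimalPeriod ⇑(G.step ^ 2) x = l / 2 := fun x => by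
    rw [coe_pow, minimalPeriod_iterate_eq_div_gcd two_ne_zero, hperiod,
      Nat.gcd_eq_right heven.two_dvd]
  have hwalks := card_quotient_sameCycle_mul hperiod
  have hwalks₂ := card_quotient_sameCycle_mul hperiod₂
  obtain ⟨r, rfl⟩ := heven
  rw [hcard] at hwalks hwalks₂
  rw [show (r + r) / 2 = r by omega] at hwalks₂
  refine ⟨?_, hperiod, ?_, hperiod₂⟩
  · exact Nat.eq_of_mul_eq_mul_right hl (hwalks.trans (by ring))
  · exact Nat.eq_of_mul_eq_mul_right (by omega) (hwalks₂.trans (by ring))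
end

section
/- Let G be a ribbon graph with a unique cycle of length l (l even), with n1 additional tree edges inside the cycle and n2 outside. Then G has exactly four distinct double-stepped Green walks: two of length l/2 + n1 and two of length l/2 + n2. -/
/-!
The faces of `G` are the cycles of the Green walk step `φ = σ ρ`. For permutations `g`, `h` of a
finite set `X` whose generated group has `k` orbits, Euler's inequality
`c(g) + c(h) + c(g h) ≤ |X| + 2 k` holds, where `c` counts cycles: induct on `h`, splitting one
point off a cycle of `h` at a time, since multiplying by a transposition changes a cycle count by
exactly one. Here `V = E` and there are two faces, so `V - E + F = 2`. Cutting a non-bridge edge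
`{x, σ x}` keeps the map connected and adds one edge; if both of its sides lay on the same face, the
cut would not lower the number of faces, contradicting Euler's inequality. Hence `σ` exchanges the
non-bridge half-edges of the two faces, each face carries `l` of them, and the faces have the even
lengths `l + 2 n₁` and `l + 2 n₂`. A cycle of `φ` of even length `m` splits into two cycles of `φ²`
of length `m / 2`.
-/

open Equiv Function

theorem Nat.card_and_add_card_not_and {α : Type*} [Finite α] (p q : α → Prop) :
    Nat.card {x // q x ∧ p x} + Nat.card {x // ¬ q x ∧ p x} = Nat.card {x // p x} := by
  classical
  have := Fintype.ofFinite α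
  simp only [Nat.card_eq_fintype_card, Fintype.card_subtype, and_comm (b := p _),
    ← Finset.filter_filter, Finset.card_filter_add_card_filter_not]

namespace Setoid

variable {α : Type*}

-- The least coarsening of `s` relating `a` and `b`: the class of `b` is sent to that of `a`.
open Classical in
noncomputable def merge (s : Setoid α) (a b : α) : Setoid α :=
  ker fun x => if s x b then Quotient.mk s a else Quotient.mk s x

variable {s t : Setoid α} {a b x y : α}

open Classical in
theorem merge_iff : s.merge a b x y ↔
    (if s x b then Quotient.mk s a else Quotient.mk s x) =
      (if s y b then Quotient.mk s a else Quotient.mk s y) :=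
  Iff.rfl

theorem le_merge : s ≤ s.merge a b := by
  intro x y hxy
  rw [merge_iff]
  by_cases hx : s x b
  · rw [if_pos hx, if_pos (s.trans (s.symm hxy) hx)]
  · rw [if_neg hx, if_neg fun hy => hx (s.trans hxy hy)]
    exact Quotient.sound hxy

theorem merge_rel : s.merge a b a b := by
  rw [merge_iff, if_pos (s.refl b)]
  split_ifs <;> rfl

theorem merge_le (hst : s ≤ t) (hab : t a b) : s.merge a b ≤ t := by
  intro x y hxy
  rw [merge_iff] at hxy
  split_ifs at hxy with hx hy hy
  · exact t.trans (hst hx) (t.symm (hst hy))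
  · exact t.trans (hst hx) (t.trans (t.symm hab) (hst (Quotient.exact hxy)))
  · exact t.trans (hst (Quotient.exact hxy)) (t.trans hab (t.symm (hst hy)))
  · exact hst (Quotient.exact hxy)

theorem merge_eq_of_rel (hab : s a b) : s.merge a b = s :=
  le_antisymm (merge_le le_rfl hab) le_merge

theorem card_quotient_le_of_le [Finite α] (h : s ≤ t) :
    Nat.card (Quotient t) ≤ Nat.card (Quotient s) :=
  Nat.card_le_card_of_surjective _ (Quotient.map_surjective (f := id) (fun _ _ hxy => h hxy)
    surjective_id)

theorem card_quotient_merge_add_one [Finite α] (hab : ¬ s a b) :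
    Nat.card (Quotient (s.merge a b)) + 1 = Nat.card (Quotient s) := by
  classical
  have hrange : Set.range (fun x => if s x b then Quotient.mk s a else Quotient.mk s x) =
      {Quotient.mk s b}ᶜ := by
    ext q
    induction q using Quotient.inductionOn with | h y => ?_
    simp only [Set.mem_range, Set.mem_compl_singleton_iff, ne_eq, Quotient.eq]
    constructor
    · rintro ⟨x, hx⟩ hyb
      split_ifs at hx with hxb
      · exact hab (s.trans (Quotient.exact hx) hyb)
      · exact hxb (s.trans (Quotient.exact hx) hyb)
    · intro hyb
      exact ⟨y, if_neg hyb⟩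
  rw [merge, Nat.card_congr (quotientKerEquivRange _), hrange, Nat.card_coe_set_eq,
    ← Set.ncard_singleton (Quotient.mk s b), Set.ncard_compl_add_ncard]

theorem card_quotient_le_card_quotient_merge_add_one [Finite α] :
    Nat.card (Quotient s) ≤ Nat.card (Quotient (s.merge a b)) + 1 := by
  by_cases hab : s a b
  · rw [merge_eq_of_rel hab]; omega
  · rw [card_quotient_merge_add_one hab]

end Setoid

namespace Equiv.Perm

variable {α : Type*} {f : Perm α} {x y : α}

-- Fixed points count as cycles, unlike in `Equiv.Perm.cycleType`.
noncomputable def numCycles (f : Perm α) : ℕ := Nat.card (Quotient (SameCycle.setoid f))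

theorem SameCycle.setoid_le {s : Setoid α} (h : ∀ x, s x (f x)) :
    SameCycle.setoid f ≤ s := by
  have key : ∀ (n : ℤ) x, s x ((f ^ n) x) := by
    intro n
    induction n using Int.induction_on with
    | zero => exact s.refl
    | succ n ih =>
      intro x
      rw [add_comm, zpow_add, zpow_one, mul_apply]
      exact s.trans (ih x) (h _)
    | pred n ih =>
      intro x
      have := h ((f ^ (-(n : ℤ) - 1)) x)
      rw [← mul_apply, ← zpow_one_add, add_sub_cancel] at this
      exact s.trans (ih x) (s.symm this)
  rintro x _ ⟨n, rfl⟩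
  exact key n x

theorem rel_mul_swap_apply [DecidableEq α] {s : Setoid α} {h : Perm α} {a b : α}
    (hh : ∀ z, s z (h z)) (hab : s a b) (z : α) : s z ((h * swap a b) z) := by
  rw [mul_apply]
  rcases eq_or_ne z a with rfl | hza
  · rw [swap_apply_left]
    exact s.trans' hab (hh b)
  rcases eq_or_ne z b with rfl | hzb
  · rw [swap_apply_right]
    exact s.trans' (s.symm' hab) (hh a)
  · rw [swap_apply_of_ne_of_ne hza hzb]
    exact hh z

theorem merge_sameCycleSetoid_mul_swap [DecidableEq α] (f : Perm α) (a b : α) :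
    (SameCycle.setoid (f * swap a b)).merge a b = (SameCycle.setoid f).merge a b := by
  have key : ∀ g h : Perm α, g = h * swap a b →
      (SameCycle.setoid g).merge a b ≤ (SameCycle.setoid h).merge a b := by
    rintro g h rfl
    exact Setoid.merge_le (SameCycle.setoid_le (rel_mul_swap_apply
      (fun z => Setoid.le_merge (⟨1, by simp⟩ : h.SameCycle z (h z))) Setoid.merge_rel))
      Setoid.merge_rel
  exact le_antisymm (key _ _ rfl) (key _ _ (by rw [mul_assoc, swap_mul_self, mul_one]))

theorem card_sameCycle [Finite α] (f : Perm α) (x : α) :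
    Nat.card {y // f.SameCycle x y} = minimalPeriod f x := by
  have e : {y // f.SameCycle x y} ≃ MulAction.orbit (Subgroup.zpowers f) x :=
    Equiv.subtypeEquivRight fun y => by
      simp only [SameCycle, MulAction.mem_orbit_iff, Subgroup.exists_zpowers]
      rfl
  rw [Nat.card_congr (e.trans (MulAction.orbitZPowersEquiv f x)), Nat.card_zmod]
  rfl

theorem minimalPeriod_pos [Finite α] (f : Perm α) (x : α) : 0 < minimalPeriod f x := by
  rw [← card_sameCycle]
  have : Nonempty {y // f.SameCycle x y} := ⟨⟨x, SameCycle.refl f x⟩⟩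
  exact Nat.card_pos

theorem sameCycle_mul_swap_of_not_sameCycle [Finite α] [DecidableEq α] {a b : α}
    (h : ¬ f.SameCycle a b) : (f * swap a b).SameCycle a b := by
  set m := minimalPeriod f b
  have hiter : ∀ j < m, ((f * swap a b) ^ (j + 1)) a = (f ^ (j + 1)) b := by
    intro j hj
    induction j with
    | zero => simp
    | succ j ih =>
      have hne_a : (f ^ (j + 1)) b ≠ a := fun hc =>
        h (show f.SameCycle b a from ⟨(j + 1 : ℕ), by rwa [zpow_natCast]⟩).symm
      have hne_b : (f ^ (j + 1)) b ≠ b := fun hc =>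
        Nat.succ_ne_zero j <| IsPeriodicPt.eq_zero_of_lt_minimalPeriod
          (by rwa [IsPeriodicPt, IsFixedPt, iterate_eq_pow]) (by omega)
      rw [pow_succ', mul_apply, ih (by omega), mul_apply, swap_apply_of_ne_of_ne hne_a hne_b,
        ← mul_apply, ← pow_succ']
  obtain ⟨k, hk⟩ : ∃ k, m = k + 1 := Nat.exists_eq_succ_of_ne_zero (minimalPeriod_pos f b).ne'
  refine ⟨m, ?_⟩
  rw [zpow_natCast, hk, hiter k (by omega), ← hk, ← iterate_eq_pow, iterate_minimalPeriod]

section swap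

variable [Finite α] [DecidableEq α] {a b : α}

theorem numCycles_mul_swap_add_one (h : ¬ f.SameCycle a b) :
    (f * swap a b).numCycles + 1 = f.numCycles := by
  have := Setoid.card_quotient_merge_add_one (s := SameCycle.setoid f) h
  rwa [← merge_sameCycleSetoid_mul_swap,
    Setoid.merge_eq_of_rel (sameCycle_mul_swap_of_not_sameCycle h)] at this

theorem numCycles_mul_swap_apply (ha : f a ≠ a) :
    (f * swap a (f a)).numCycles = f.numCycles + 1 := by
  have hfix : IsFixedPt (f * swap a (f a)) (f a) := by simp [IsFixedPt, mul_apply]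
  have := numCycles_mul_swap_add_one fun hc => ha (hc.symm.eq_of_left hfix)
  rwa [mul_assoc, swap_mul_self, mul_one, eq_comm] at this

theorem numCycles_mul_swap_le : (f * swap a b).numCycles ≤ f.numCycles + 1 :=
  calc (f * swap a b).numCycles
      ≤ Nat.card (Quotient ((SameCycle.setoid (f * swap a b)).merge a b)) + 1 :=
        Setoid.card_quotient_le_card_quotient_merge_add_one
    _ ≤ f.numCycles + 1 := by
        rw [merge_sameCycleSetoid_mul_swap]
        exact Nat.add_le_add_right (Setoid.card_quotient_le_of_le Setoid.le_merge) 1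

theorem numCycles_le_numCycles_mul_swap (h : f.SameCycle a b) :
    f.numCycles ≤ (f * swap a b).numCycles := by
  have := Setoid.card_quotient_le_of_le (Setoid.le_merge (s := SameCycle.setoid (f * swap a b))
    (a := a) (b := b))
  rwa [merge_sameCycleSetoid_mul_swap, Setoid.merge_eq_of_rel h] at this

end swap

theorem numCycles_one : (1 : Perm α).numCycles = Nat.card α :=
  (Nat.card_eq_of_bijective _ ⟨fun _ _ hxy => sameCycle_one.mp (Quotient.exact hxy),
    Quotient.mk_surjective⟩).symm

theorem numCycles_eq_card {ι : Type*} (v : ι → α) (hinj : ∀ i j, f.SameCycle (v i) (v j) → i = j)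
    (hcov : ∀ x, ∃ i, f.SameCycle (v i) x) : f.numCycles = Nat.card ι :=
  (Nat.card_eq_of_bijective (fun i => Quotient.mk _ (v i))
    ⟨fun i j hij => hinj i j (Quotient.exact hij),
      fun q => q.inductionOn fun x => (hcov x).imp fun _ hi => Quotient.sound hi⟩).symm

theorem numCycles_eq_two {w₁ w₂ : α} (hdist : ¬ f.SameCycle w₁ w₂)
    (hall : ∀ x, f.SameCycle w₁ x ∨ f.SameCycle w₂ x) : f.numCycles = 2 := by
  rw [numCycles_eq_card (fun b => cond b w₂ w₁), Nat.card_eq_fintype_card, Fintype.card_bool]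
  · rintro (_ | _) (_ | _) hij
    exacts [rfl, absurd hij hdist, absurd hij.symm hdist, rfl]
  · exact fun x => (hall x).elim (fun h => ⟨false, h⟩) fun h => ⟨true, h⟩

theorem card_eq_mul_numCycles [Finite α] {k : ℕ} (h : ∀ x, minimalPeriod f x = k) :
    Nat.card α = k * f.numCycles := by
  have := Fintype.ofFinite (Quotient (SameCycle.setoid f))
  have hfiber : ∀ q : Quotient (SameCycle.setoid f), Nat.card {x // Quotient.mk _ x = q} = k := by
    refine fun q => q.inductionOn fun y => ?_
    rw [← h y, ← card_sameCycle]
    exact Nat.card_congr <| Equiv.subtypeEquivRight fun x =>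
      Quotient.eq.trans ⟨SameCycle.symm, SameCycle.symm⟩
  rw [← Nat.card_congr (Equiv.sigmaFiberEquiv (Quotient.mk (SameCycle.setoid f))), Nat.card_sigma,
    Finset.sum_congr rfl fun q _ => hfiber q, Finset.sum_const, Finset.card_univ, smul_eq_mul,
    mul_comm, numCycles, Nat.card_eq_fintype_card]

theorem SameCycle.sq_or_sq_apply (h : f.SameCycle x y) :
    (f ^ 2).SameCycle x y ∨ (f ^ 2).SameCycle (f x) y := by
  obtain ⟨i, rfl⟩ := h
  obtain ⟨k, rfl | rfl⟩ := Int.even_or_odd' i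
  · exact Or.inl ⟨k, by rw [← zpow_natCast, ← zpow_mul]; norm_num⟩
  · refine Or.inr ⟨k, ?_⟩
    rw [← mul_apply, ← zpow_natCast, ← zpow_mul, ← zpow_add_one]
    norm_num

theorem not_sameCycle_sq_apply (h : Even (minimalPeriod f x)) : ¬ (f ^ 2).SameCycle x (f x) := by
  rintro ⟨k, hk⟩
  have hk' : (f ^ (2 * k)) x = f x := by rw [zpow_mul]; exact_mod_cast hk
  have hfix : f ^ (-1 + 2 * k) • x = x := by
    rw [zpow_add, mul_smul, Perm.smul_def, Perm.smul_def, hk', zpow_neg_one]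
    exact f.symm_apply_apply x
  rw [MulAction.zpow_smul_eq_iff_minimalPeriod_dvd] at hfix
  change ((minimalPeriod f x : ℕ) : ℤ) ∣ _ at hfix
  obtain ⟨m, hm⟩ := h
  have : (2 : ℤ) ∣ -1 + 2 * k := dvd_trans ⟨m, by rw [hm]; push_cast; ring⟩ hfix
  omega

theorem numCycles_sq [Finite α] (h : ∀ x, Even (minimalPeriod f x)) :
    (f ^ 2).numCycles = 2 * f.numCycles := by
  let v : Quotient (SameCycle.setoid f) × Bool → α := fun p => cond p.2 (f p.1.out) p.1.out
  have hv : ∀ p, f.SameCycle p.1.out (v p) := by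
    rintro ⟨q, _ | _⟩
    · exact SameCycle.refl f _
    · exact ⟨1, by simp [v]⟩
  rw [numCycles_eq_card v ?_ ?_, Nat.card_prod, Nat.card_eq_fintype_card (α := Bool),
    Fintype.card_bool, mul_comm, numCycles]
  · rintro ⟨q, e⟩ ⟨q', e'⟩ hqq
    obtain rfl : q = q' := Quotient.out_equiv_out.mp
      (((hv (q, e)).trans hqq.of_pow).trans (hv (q', e')).symm)
    cases e <;> cases e'
    · rfl
    · exact absurd hqq (not_sameCycle_sq_apply (h _))
    · exact absurd hqq.symm (not_sameCycle_sq_apply (h _))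
    · rfl
  · intro x
    rcases (Quotient.mk_out (s := SameCycle.setoid f) x).sq_or_sq_apply with hx | hx
    · exact ⟨(Quotient.mk _ x, false), hx⟩
    · exact ⟨(Quotient.mk _ x, true), hx⟩

theorem minimalPeriod_sq (h : Even (minimalPeriod f x)) :
    minimalPeriod ⇑(f ^ 2) x = minimalPeriod f x / 2 := by
  rw [coe_pow, minimalPeriod_iterate_eq_div_gcd two_ne_zero,
    Nat.gcd_eq_right (even_iff_two_dvd.mp h)]

def connSetoid (g h : Perm α) : Setoid α :=
  Relation.EqvGen.setoid fun x y => g x = y ∨ h x = y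

theorem connSetoid_rel_left (g h : Perm α) (x : α) : connSetoid g h x (g x) :=
  Relation.EqvGen.rel _ _ (Or.inl rfl)

theorem connSetoid_rel_right (g h : Perm α) (x : α) : connSetoid g h x (h x) :=
  Relation.EqvGen.rel _ _ (Or.inr rfl)

theorem connSetoid_one (g : Perm α) : connSetoid g 1 = SameCycle.setoid g :=
  le_antisymm
    (Setoid.eqvGen_le fun x y => by
      rintro (rfl | rfl)
      exacts [⟨1, by simp⟩, SameCycle.refl g x])
    (SameCycle.setoid_le (connSetoid_rel_left g 1))

theorem sameCycleSetoid_mul_le_connSetoid (g h : Perm α) :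
    SameCycle.setoid (g * h) ≤ connSetoid g h :=
  SameCycle.setoid_le fun x =>
    (connSetoid g h).trans' (connSetoid_rel_right g h x) (connSetoid_rel_left g h (h x))

theorem connSetoid_mul_swap_le [DecidableEq α] (g h : Perm α) (a b : α) :
    connSetoid g (h * swap a b) ≤ (connSetoid g h).merge a b :=
  Setoid.eqvGen_le fun x y => by
    rintro (rfl | rfl)
    · exact Setoid.le_merge (connSetoid_rel_left g h x)
    · exact rel_mul_swap_apply (fun z => Setoid.le_merge (connSetoid_rel_right g h z))
        Setoid.merge_rel x

theorem euler_inequality_mul_swap [Finite α] [DecidableEq α] {g h : Perm α} {a b : α}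
    (hjoin : (h * swap a b).numCycles + 1 = h.numCycles)
    (ih : g.numCycles + h.numCycles + (g * h).numCycles ≤
      Nat.card α + 2 * Nat.card (Quotient (connSetoid g h))) :
    g.numCycles + (h * swap a b).numCycles + (g * (h * swap a b)).numCycles ≤
      Nat.card α + 2 * Nat.card (Quotient (connSetoid g (h * swap a b))) := by
  have hconn := Setoid.card_quotient_le_of_le (connSetoid_mul_swap_le g h a b)
  rw [← mul_assoc]
  by_cases hab : (g * h).SameCycle a b
  · have := numCycles_mul_swap_le (f := g * h) (a := a) (b := b)
    rw [Setoid.merge_eq_of_rel (sameCycleSetoid_mul_le_connSetoid g h hab)] at hconn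
    omega
  · have := numCycles_mul_swap_add_one hab
    have := Setoid.card_quotient_le_card_quotient_merge_add_one (s := connSetoid g h) (a := a)
      (b := b)
    omega

-- The hypermap `(g, h)` has genus `(|α| + 2k - c(g) - c(h) - c(gh)) / 2 ≥ 0`, where `k` counts
-- the orbits of the group generated by `g` and `h`.
theorem euler_inequality [Finite α] (g h : Perm α) :
    g.numCycles + h.numCycles + (g * h).numCycles ≤
      Nat.card α + 2 * Nat.card (Quotient (connSetoid g h)) := by
  classical
  have := Fintype.ofFinite α
  induction hn : h.support.card using Nat.strong_induction_on generalizing h with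
  | _ n ih =>
    by_cases h1 : h = 1
    · rw [h1, connSetoid_one, numCycles_one, mul_one]
      unfold numCycles
      omega
    obtain ⟨a, ha⟩ : ∃ a, h a ≠ a := not_forall.mp fun hfix => h1 (Equiv.ext hfix)
    have hsupp : (h * swap a (h a)).support.card < n := by
      have := card_support_swap_mul (f := h) (h.injective.ne ha)
      rwa [swap_apply_apply, inv_mul_cancel_right, hn] at this
    have := euler_inequality_mul_swap (a := a) (b := h a)
      (by rw [mul_assoc, swap_mul_self, mul_one, numCycles_mul_swap_apply ha])
      (ih _ hsupp (h * swap a (h a)) rfl)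
    rwa [mul_assoc, swap_mul_self, mul_one] at this

end Equiv.Perm

theorem card_quotient_sameCycleSetoid {H : Type} (f : Perm H) :
    Nat.card (Quotient (sameCycleSetoid f)) = f.numCycles :=
  rfl

namespace RibbonGraph

open Relation Perm

variable {H : Type} (G : RibbonGraph H)

theorem numVertices_eq_numCycles : G.numVertices = G.rho.numCycles :=
  rfl

noncomputable def numFaces : ℕ := G.step.numCycles

theorem card_eq_two_mul_numEdges [Finite H] : Nat.card H = 2 * G.numEdges :=
  card_eq_mul_numCycles fun x => minimalPeriod_eq_prime (G.invol x) (G.noFix x)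

theorem step_rho_inv (x : H) : G.step (G.rho⁻¹ x) = G.sigma x :=
  congrArg G.sigma (G.rho.apply_symm_apply x)

def adjAvoiding (x₀ a b : H) : Prop :=
  G.rho a = b ∨ G.rho b = a ∨ (G.sigma a = b ∧ a ≠ x₀ ∧ a ≠ G.sigma x₀)

theorem isBridge_iff {x₀ : H} :
    G.IsBridge x₀ ↔ ¬ ReflTransGen (G.adjAvoiding x₀) x₀ (G.sigma x₀) :=
  Iff.rfl

instance (x₀ : H) : Std.Symm (G.adjAvoiding x₀) where
  symm a b := by
    rintro (hab | hab | ⟨rfl, ha₁, ha₂⟩)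
    · exact Or.inr (Or.inl hab)
    · exact Or.inl hab
    · refine Or.inr (Or.inr ⟨G.invol a, fun h => ha₂ ?_, fun h => ha₁ (G.sigma.injective h)⟩)
      rw [← h, G.invol]

theorem adjAvoiding_sigma (x₀ : H) : G.adjAvoiding (G.sigma x₀) = G.adjAvoiding x₀ := by
  ext a b
  simp only [adjAvoiding, G.invol, and_comm (a := a ≠ G.sigma x₀)]

theorem isBridge_sigma_iff {x₀ : H} : G.IsBridge (G.sigma x₀) ↔ G.IsBridge x₀ := by
  rw [isBridge_iff, isBridge_iff, adjAvoiding_sigma, G.invol]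
  exact not_congr ⟨Std.Symm.symm _ _, Std.Symm.symm _ _⟩

section cut

variable [DecidableEq H]

-- Deleting the edge `{x, σ x}` turns its two half-edges into fixed points of the involution.
def cut (x : H) : Perm H := G.sigma * Equiv.swap x (G.sigma x)

theorem numCycles_cut [Finite H] (x : H) : (G.cut x).numCycles = G.numEdges + 1 :=
  numCycles_mul_swap_apply (G.noFix x)

theorem cut_mul_rho (x : H) :
    G.cut x * G.rho = G.step * Equiv.swap (G.rho⁻¹ x) (G.rho⁻¹ (G.sigma x)) := by
  rw [swap_apply_apply, inv_inv, cut, show G.step = G.sigma * G.rho from rfl]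
  group

theorem cut_apply_of_ne {x₀ a : H} (ha₁ : a ≠ x₀) (ha₂ : a ≠ G.sigma x₀) :
    G.cut x₀ a = G.sigma a :=
  congrArg G.sigma (swap_apply_of_ne_of_ne ha₁ ha₂)

theorem connSetoid_cut_rel {x₀ : H} (hx₀ : ¬ G.IsBridge x₀) (a b : H) :
    connSetoid (G.cut x₀) G.rho a b := by
  set s := connSetoid (G.cut x₀) G.rho
  have hadj : ∀ a b, G.adjAvoiding x₀ a b → s a b := by
    rintro a b (rfl | rfl | ⟨rfl, ha₁, ha₂⟩)
    · exact connSetoid_rel_right _ _ a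
    · exact s.symm' (connSetoid_rel_right _ _ b)
    · exact G.cut_apply_of_ne ha₁ ha₂ ▸ connSetoid_rel_left _ _ a
  have hreach : ∀ y, ReflTransGen (G.adjAvoiding x₀) x₀ y → s x₀ y := by
    intro y hy
    induction hy with
    | refl => exact s.refl' x₀
    | tail _ hbc ih => exact s.trans' ih (hadj _ _ hbc)
  have hedge : s x₀ (G.sigma x₀) := hreach _ (not_not.mp hx₀)
  refine Setoid.eqvGen_le (s := s) (fun p q => ?_) (G.conn a b)
  rintro (rfl | rfl)
  · rcases eq_or_ne p x₀ with rfl | hp₁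
    · exact hedge
    rcases eq_or_ne p (G.sigma x₀) with rfl | hp₂
    · rw [G.invol]
      exact s.symm' hedge
    · exact G.cut_apply_of_ne hp₁ hp₂ ▸ connSetoid_rel_left _ _ p
  · exact connSetoid_rel_right _ _ p

end cut

theorem not_sameCycle_step_sigma [Finite H]
    (hplanar : G.numVertices + G.numFaces = G.numEdges + 2) {x : H} (hx : ¬ G.IsBridge x) :
    ¬ G.step.SameCycle x (G.sigma x) := by
  classical
  intro hsc
  have hfaces : G.numFaces ≤ (G.cut x * G.rho).numCycles := by
    rw [cut_mul_rho]
    refine numCycles_le_numCycles_mul_swap ?_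
    have h₁ : G.step.SameCycle (G.rho⁻¹ x) (G.sigma x) := ⟨1, by rw [zpow_one, step_rho_inv]⟩
    have h₂ : G.step.SameCycle (G.rho⁻¹ (G.sigma x)) x :=
      ⟨1, by rw [zpow_one, step_rho_inv, G.invol]⟩
    exact (h₁.trans hsc.symm).trans h₂.symm
  have hconn : Nat.card (Quotient (connSetoid (G.cut x) G.rho)) = 1 := by
    have : Subsingleton (Quotient (connSetoid (G.cut x) G.rho)) :=
      ⟨fun p q => Quotient.inductionOn₂ p q fun a b => Quotient.sound (G.connSetoid_cut_rel hx a b)⟩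
    exact Nat.card_eq_one_iff_unique.mpr ⟨this, ⟨Quotient.mk _ x⟩⟩
  have heuler := euler_inequality (G.cut x) G.rho
  rw [numCycles_cut, hconn, G.card_eq_two_mul_numEdges, ← numVertices_eq_numCycles] at heuler
  omega

theorem card_not_isBridge_eq_two_mul [Finite H]
    (hplanar : G.numVertices + G.numFaces = G.numEdges + 2) {w₁ w₂ : H}
    (hall : ∀ x, G.step.SameCycle w₁ x ∨ G.step.SameCycle w₂ x) :
    Nat.card {x // ¬ G.IsBridge x} =
      2 * Nat.card {x // G.step.SameCycle w₁ x ∧ ¬ G.IsBridge x} := by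
  have hsigma : ∀ x, ¬ G.IsBridge x →
      (G.step.SameCycle w₁ (G.sigma x) ↔ ¬ G.step.SameCycle w₁ x) := by
    intro x hx
    have hsc := G.not_sameCycle_step_sigma hplanar hx
    refine ⟨fun h₁ h₁' => hsc (h₁'.symm.trans h₁), fun h => ?_⟩
    exact (hall _).resolve_right fun h₂ => hsc (((hall x).resolve_left h).symm.trans h₂)
  have hswap : {x // ¬ G.step.SameCycle w₁ x ∧ ¬ G.IsBridge x} ≃
      {x // G.step.SameCycle w₁ x ∧ ¬ G.IsBridge x} :=
    { toFun x := ⟨G.sigma x, (hsigma x x.2.2).mpr x.2.1, G.isBridge_sigma_iff.not.mpr x.2.2⟩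
      invFun x := ⟨G.sigma x, fun h => (hsigma x x.2.2).mp h x.2.1,
        G.isBridge_sigma_iff.not.mpr x.2.2⟩
      left_inv x := Subtype.ext (G.invol x)
      right_inv x := Subtype.ext (G.invol x) }
  rw [← Nat.card_and_add_card_not_and _ (G.step.SameCycle w₁), Nat.card_congr hswap, two_mul]

theorem two_mul_minimalPeriod_step [Finite H]
    (hplanar : G.numVertices + G.numFaces = G.numEdges + 2) {w₁ w₂ x : H}
    (hall : ∀ x, G.step.SameCycle w₁ x ∨ G.step.SameCycle w₂ x) (hx : G.step.SameCycle w₁ x) :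
    2 * minimalPeriod G.step x =
      2 * Nat.card {y // G.IsBridge y ∧ G.step.SameCycle w₁ y} +
        Nat.card {y // ¬ G.IsBridge y} := by
  have hface : minimalPeriod G.step x = Nat.card {y // G.step.SameCycle w₁ y} := by
    rw [← card_sameCycle]
    exact Nat.card_congr (Equiv.subtypeEquivRight fun y => ⟨hx.trans, hx.symm.trans⟩)
  have hcomm : Nat.card {y // ¬ G.IsBridge y ∧ G.step.SameCycle w₁ y} =
      Nat.card {y // G.step.SameCycle w₁ y ∧ ¬ G.IsBridge y} :=
    Nat.card_congr (Equiv.subtypeEquivRight fun _ => and_comm)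
  rw [hface, ← Nat.card_and_add_card_not_and _ G.IsBridge, hcomm,
    G.card_not_isBridge_eq_two_mul hplanar hall]
  ring

end RibbonGraph

theorem unicyclic_even_double_stepped_green_walks_general
    (H : Type) [Fintype H] (G : RibbonGraph H) (l n₁ n₂ : ℕ) (heven : Even l)
    (hunicyclic : G.numEdges = G.numVertices)
    (hcyc : Nat.card {x : H // ¬ G.IsBridge x} = 2 * l)
    (w₁ w₂ : H)
    (hdist : ¬ G.step.SameCycle w₁ w₂)
    (hall : ∀ x : H, G.step.SameCycle w₁ x ∨ G.step.SameCycle w₂ x)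
    (hin : Nat.card {x : H // G.IsBridge x ∧ G.step.SameCycle w₁ x} = 2 * n₁)
    (hout : Nat.card {x : H // G.IsBridge x ∧ G.step.SameCycle w₂ x} = 2 * n₂) :
    Nat.card (Quotient (sameCycleSetoid (G.step ^ 2))) = 4 ∧
      (∀ x : H, G.step.SameCycle w₁ x →
        Function.minimalPeriod (⇑(G.step ^ 2)) x = l / 2 + n₁) ∧
      (∀ x : H, G.step.SameCycle w₂ x →
        Function.minimalPeriod (⇑(G.step ^ 2)) x = l / 2 + n₂) := by
  obtain ⟨d, rfl⟩ := heven
  have hfaces : G.numFaces = 2 := Perm.numCycles_eq_two hdist hall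
  have hplanar : G.numVertices + G.numFaces = G.numEdges + 2 := by omega
  have hper₁ : ∀ x, G.step.SameCycle w₁ x → minimalPeriod G.step x = d + d + 2 * n₁ := by
    intro x hx
    have := G.two_mul_minimalPeriod_step hplanar hall hx
    omega
  have hper₂ : ∀ x, G.step.SameCycle w₂ x → minimalPeriod G.step x = d + d + 2 * n₂ := by
    intro x hx
    have := G.two_mul_minimalPeriod_step hplanar (fun y => (hall y).symm) hx
    omega
  have hper_even : ∀ x, Even (minimalPeriod G.step x) := fun x =>
    (hall x).elim (fun hx => ⟨d + n₁, by rw [hper₁ x hx]; ring⟩)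
      fun hx => ⟨d + n₂, by rw [hper₂ x hx]; ring⟩
  refine ⟨?_, fun x hx => ?_, fun x hx => ?_⟩
  · rw [card_quotient_sameCycleSetoid, Perm.numCycles_sq hper_even,
      Perm.numCycles_eq_two hdist hall]
  · rw [Perm.minimalPeriod_sq (hper_even x), hper₁ x hx]
    omega
  · rw [Perm.minimalPeriod_sq (hper_even x), hper₂ x hx]
    omega

/-- Let `G` be a ribbon graph with a unique cycle, of even length `l`
(so `G` is connected and unicyclic, and the non-bridge edges — the edges of the
cycle — account for `2 * l` half-edges).  `G` has exactly two distinct Green walks,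
with representatives `w₁` (the inside) and `w₂` (the outside); suppose `n₁` of the
tree (bridge) edges have their half-edges on the walk of `w₁` and `n₂` on the walk
of `w₂`.  Then `G` has exactly four distinct double-stepped Green walks: two of
length `l / 2 + n₁` (those inside the walk of `w₁`) and two of length `l / 2 + n₂`
(those inside the walk of `w₂`). -/
theorem unicyclic_even_double_stepped_green_walks
    (H : Type) [Fintype H] (G : RibbonGraph H) (l n₁ n₂ : ℕ) (heven : Even l) (hl : 0 < l)
    (hunicyclic : G.numEdges = G.numVertices)
    (hcyc : Nat.card {x : H // ¬ G.IsBridge x} = 2 * l)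
    (w₁ w₂ : H)
    (hdist : ¬ G.step.SameCycle w₁ w₂)
    (hall : ∀ x : H, G.step.SameCycle w₁ x ∨ G.step.SameCycle w₂ x)
    (hin : Nat.card {x : H // G.IsBridge x ∧ G.step.SameCycle w₁ x} = 2 * n₁)
    (hout : Nat.card {x : H // G.IsBridge x ∧ G.step.SameCycle w₂ x} = 2 * n₂) :
    Nat.card (Quotient (sameCycleSetoid (G.step ^ 2))) = 4 ∧
      (∀ x : H, G.step.SameCycle w₁ x →
        Function.minimalPeriod (⇑(G.step ^ 2)) x = l / 2 + n₁) ∧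
      (∀ x : H, G.step.SameCycle w₂ x →
        Function.minimalPeriod (⇑(G.step ^ 2)) x = l / 2 + n₂) :=
  unicyclic_even_double_stepped_green_walks_general H G l n₁ n₂ heven hunicyclic hcyc w₁ w₂ hdist
    hall hin hout
end
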